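/- arXiv:1110.6310 — 3 statements merged into one kernel-verified Lean document; each statement's English description precedes it below -/
import Mathlib

section
/- Let α > 0, a, b ∈ ℝ and n ∈ ℕ. Then the integral I_n(a,b,α) = ∫_{-∞}^{∞} (a x + b)^n e^{-α x²} dx equals √(π/α) · H_n(b, a²/(4α)), where H_n is the two-variable Hermite polynomial. -/
open Real MeasureTheory

/-- Two-variable Hermite polynomials
`H_n(x,y) = n! ∑_{k=0}^{⌊n/2⌋} x^{n-2k} y^k / ((n-2k)! k!)`. -/
noncomputable def hermite2 (n : ℕ) (x y : ℝ) : ℝ :=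
  (n.factorial : ℝ) * ∑ k ∈ Finset.range (n / 2 + 1),
    x ^ (n - 2 * k) * y ^ k / ((Nat.factorial (n - 2 * k) : ℝ) * (Nat.factorial k : ℝ))

/-! Expand `(a x + b)^n` binomially and integrate term by term against the Gaussian. The odd
moments vanish by symmetry, and the even moments `∫ x^(2k) e^{-α x²} = √(π/α) (2k)! / (k! (4α)^k)`
come from the Gamma integral at half-integers. Matching `n.choose (2k) * (2k)!` against
`n! / (n - 2k)!` turns the surviving terms into those of `H_n(b, a²/(4α))`. -/

open Finset Nat

theorem Finset.sum_range_succ_eq_sum_range_half_of_odd {M : Type*} [AddCommMonoid M]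
    (f : ℕ → M) (hf : ∀ j, Odd j → f j = 0) (n : ℕ) :
    ∑ j ∈ range (n + 1), f j = ∑ k ∈ range (n / 2 + 1), f (2 * k) := by
  rw [← sum_image (g := (2 * ·)) (mul_right_injective₀ two_ne_zero).injOn]
  refine (sum_subset ?_ fun j hjn hj => hf j ?_).symm
  · intro j
    simp only [mem_image, mem_range, forall_exists_index, and_imp]
    omega
  · simp only [mem_image, mem_range, not_exists, not_and] at hjn hj
    rcases Nat.even_or_odd j with ⟨k, rfl⟩ | hodd
    · exact absurd (two_mul k) (hj k (by omega))
    · exact hodd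

theorem integral_eq_zero_of_odd {G E : Type*} [NormedAddCommGroup E] [NormedSpace ℝ E]
    [AddGroup G] [MeasurableSpace G] [MeasurableNeg G] (μ : Measure G) [μ.IsNegInvariant]
    {f : G → E} (hf : f.Odd) : ∫ x, f x ∂μ = 0 := by
  have h := integral_neg_eq_self f μ
  rw [integral_congr_ae (.of_forall hf), integral_neg, neg_eq_iff_add_eq_zero, ← two_smul ℝ,
    smul_eq_zero] at h
  exact h.resolve_left two_ne_zero

theorem Nat.factorial_two_mul_eq (k : ℕ) : (2 * k)! = 2 ^ k * k ! * (2 * k - 1)‼ := by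
  cases k with
  | zero => rfl
  | succ m =>
    rw [show 2 * (m + 1) = 2 * m + 1 + 1 by ring, factorial_eq_mul_doubleFactorial,
      show 2 * m + 1 + 1 = 2 * (m + 1) by ring, doubleFactorial_two_mul]
    rfl

theorem Real.Gamma_nat_add_half_eq_factorial (k : ℕ) :
    Gamma (k + 1 / 2) = (2 * k)! * √π / (4 ^ k * k !) := by
  rw [Gamma_nat_add_half, factorial_two_mul_eq, show (4 : ℝ) ^ k = 2 ^ k * 2 ^ k by
    rw [← mul_pow]; norm_num]
  push_cast
  field_simp

theorem integral_Ioi_pow_mul_exp_neg_mul_sq {b : ℝ} (hb : 0 < b) (m : ℕ) :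
    ∫ x in Set.Ioi 0, x ^ m * exp (-b * x ^ 2)
      = b ^ (-(m + 1 : ℝ) / 2) * (1 / 2) * Gamma ((m + 1) / 2) := by
  rw [← integral_rpow_mul_exp_neg_mul_rpow two_pos (by linarith [m.cast_nonneg (α := ℝ)]) hb]
  simp_rw [rpow_natCast, rpow_two]

theorem integral_even_pow_mul_exp_neg_mul_sq {b : ℝ} (hb : 0 < b) (k : ℕ) :
    ∫ x : ℝ, x ^ (2 * k) * exp (-b * x ^ 2) = √(π / b) * (2 * k)! / (k ! * (4 * b) ^ k) := by
  have h_abs : ∫ x : ℝ, x ^ (2 * k) * exp (-b * x ^ 2)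
      = ∫ x : ℝ, (fun t => t ^ (2 * k) * exp (-b * t ^ 2)) |x| := by
    simp only [pow_mul, sq_abs]
  rw [h_abs, integral_comp_abs (f := fun t => t ^ (2 * k) * exp (-b * t ^ 2)),
    integral_Ioi_pow_mul_exp_neg_mul_sq hb,
    show ((2 * k : ℕ) + 1 : ℝ) / 2 = k + 1 / 2 by push_cast; ring, Gamma_nat_add_half_eq_factorial,
    show -((2 * k : ℕ) + 1 : ℝ) / 2 = -k + -(1 / 2) by push_cast; ring, rpow_add hb,
    rpow_neg hb.le, rpow_natCast, rpow_neg hb.le, ← sqrt_eq_rpow, sqrt_div pi_pos.le]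
  field_simp
  ring

theorem integrable_pow_mul_exp_neg_mul_sq {b : ℝ} (hb : 0 < b) (m : ℕ) :
    Integrable fun x : ℝ => x ^ m * exp (-b * x ^ 2) := by
  simpa using integrable_rpow_mul_exp_neg_mul_sq hb (s := m) (by linarith [m.cast_nonneg (α := ℝ)])

theorem integral_odd_pow_mul_exp_neg_mul_sq (b : ℝ) {m : ℕ} (hm : Odd m) :
    ∫ x : ℝ, x ^ m * exp (-b * x ^ 2) = 0 :=
  integral_eq_zero_of_odd volume fun x => by simp [hm.neg_pow]

theorem integral_affine_pow_mul_eq_sum {μ : Measure ℝ} {g : ℝ → ℝ}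
    (hg : ∀ j : ℕ, Integrable (fun x => x ^ j * g x) μ) (a b : ℝ) (n : ℕ) :
    ∫ x, (a * x + b) ^ n * g x ∂μ
      = ∑ j ∈ range (n + 1), a ^ j * b ^ (n - j) * n.choose j * ∫ x, x ^ j * g x ∂μ := by
  simp_rw [← integral_const_mul]
  rw [← integral_finsetSum _ fun j _ => (hg j).const_mul _]
  congr 1; ext x
  rw [add_pow, sum_mul]
  refine sum_congr rfl fun j _ => ?_
  ring

theorem integral_affine_pow_mul_gaussian (α a b : ℝ) (hα : 0 < α) (n : ℕ) :
    ∫ x : ℝ, (a * x + b) ^ n * Real.exp (-α * x ^ 2)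
      = Real.sqrt (π / α) * hermite2 n b (a ^ 2 / (4 * α)) := by
  rw [integral_affine_pow_mul_eq_sum (integrable_pow_mul_exp_neg_mul_sq hα),
    sum_range_succ_eq_sum_range_half_of_odd _
      fun j hj => by rw [integral_odd_pow_mul_exp_neg_mul_sq _ hj, mul_zero],
    hermite2, mul_sum, mul_sum]
  refine sum_congr rfl fun k hk => ?_
  have h2k : 2 * k ≤ n := by rw [mem_range] at hk; omega
  rw [integral_even_pow_mul_exp_neg_mul_sq hα, ← choose_mul_factorial_mul_factorial h2k, div_pow,
    pow_mul]
  push_cast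
  field_simp
end

section
/- Let α > 0, β ∈ ℝ and d > 0. Then ∫_{0}^{∞} W_{α,β}(-x) e^{-d x} dx = (1/d) · E_{α,β}(-1/d), where E_{α,β} is the two-parameter (modified) Mittag-Leffler function. (The integrand is absolutely integrable since W_{α,β} is entire of order 1/(1+α) < 1.) -/
/-!
Expand `W_{α,β}(-x)` in its power series and integrate termwise: since
`∫₀^∞ x^k e^{-dx} dx = k! / d^{k+1}`, the factorials cancel and what remains is
`d⁻¹ ∑ (-1/d)^k / Γ(kα + β)`. Fubini for the series needs `∑ d^{-k} / |Γ(kα + β)| < ∞`, which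
follows from the superexponential growth of `Γ(kα + β)`: restricting the Gamma integral to
`[M, 2M]` gives `Γ(y) ≥ e^{-2M} M^y` for `y ≥ 1`, so `c^k / Γ(kα + β)` is eventually dominated
by a geometric series as soon as `M^α > |c|`.
-/

open Real MeasureTheory Filter

/-- Wright–Bessel function `W_{α,β}(x) = ∑_{k=0}^∞ x^k / (k! Γ(kα + β))`. -/
noncomputable def wrightBessel (α β x : ℝ) : ℝ :=
  ∑' k : ℕ, x ^ k / ((k.factorial : ℝ) * Real.Gamma ((k : ℝ) * α + β))

/-- Two-parameter (modified) Mittag-Leffler function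
`E_{α,β}(x) = ∑_{k=0}^∞ x^k / Γ(αk + β)`. -/
noncomputable def mittagLeffler (α β x : ℝ) : ℝ :=
  ∑' k : ℕ, x ^ k / Real.Gamma (α * (k : ℝ) + β)

open Set
open scoped Nat

lemma exp_neg_two_mul_mul_rpow_le_Gamma {M y : ℝ} (hM : 0 < M) (hy : 1 ≤ y) :
    exp (-(2 * M)) * M ^ y ≤ Gamma y := by
  have hint : IntegrableOn (fun x => exp (-x) * x ^ (y - 1)) (Ioi 0) :=
    GammaIntegral_convergent (by linarith)
  have hsub : Ioc M (2 * M) ⊆ Ioi 0 := fun x hx => hM.trans hx.1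
  have hbound : ∀ x ∈ Ioc M (2 * M), exp (-(2 * M)) * M ^ (y - 1) ≤ exp (-x) * x ^ (y - 1) :=
    fun x hx => mul_le_mul (exp_le_exp.2 (by linarith [hx.2]))
      (rpow_le_rpow hM.le hx.1.le (by linarith)) (by positivity) (by positivity)
  calc exp (-(2 * M)) * M ^ y
      = exp (-(2 * M)) * M ^ (y - 1) * (volume (Ioc M (2 * M))).toReal := by
        rw [volume_Ioc, ENNReal.toReal_ofReal (by linarith), rpow_sub_one hM.ne']
        field_simp
        ring
    _ ≤ ∫ x in Ioc M (2 * M), exp (-x) * x ^ (y - 1) :=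
        setIntegral_ge_of_const_le_real measurableSet_Ioc (by simp) hbound (hint.mono_set hsub)
    _ ≤ ∫ x in Ioi 0, exp (-x) * x ^ (y - 1) :=
        setIntegral_mono_set hint
          (ae_restrict_of_forall_mem measurableSet_Ioi fun x (hx : 0 < x) => by positivity)
          hsub.eventuallyLE
    _ = Gamma y := (Gamma_eq_integral (by linarith)).symm

lemma summable_pow_div_Gamma_mul_add {α : ℝ} (hα : 0 < α) (β c : ℝ) :
    Summable fun k : ℕ => c ^ k / Gamma (k * α + β) := by
  set M := (|c| + 1) ^ α⁻¹
  have hM : 0 < M := by positivity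
  have hMα : M ^ α = |c| + 1 := rpow_inv_rpow (by positivity) hα.ne'
  have hratio : |c| / (|c| + 1) < 1 := (div_lt_one (by positivity)).2 (lt_add_one _)
  refine Summable.of_norm_bounded_eventually_nat
    ((summable_geometric_of_lt_one (by positivity) hratio).mul_left (exp (2 * M) / M ^ β)) ?_
  have hlarge : ∀ᶠ k : ℕ in atTop, 1 ≤ k * α + β :=
    (tendsto_atTop_add_const_right _ β
      (tendsto_natCast_atTop_atTop.atTop_mul_const hα)).eventually_ge_atTop 1
  filter_upwards [hlarge] with k hk
  have hpow : M ^ ((k : ℝ) * α + β) = (|c| + 1) ^ k * M ^ β := by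
    rw [rpow_add hM, mul_comm (k : ℝ) α, rpow_mul_natCast hM.le, hMα]
  have hΓ := exp_neg_two_mul_mul_rpow_le_Gamma hM hk
  rw [hpow] at hΓ
  rw [norm_div, norm_pow, Real.norm_eq_abs, Real.norm_eq_abs,
    abs_of_pos (hΓ.trans_lt' (by positivity))]
  calc |c| ^ k / Gamma (k * α + β)
      ≤ |c| ^ k / (exp (-(2 * M)) * ((|c| + 1) ^ k * M ^ β)) :=
        div_le_div_of_nonneg_left (by positivity) (by positivity) hΓ
    _ = exp (2 * M) / M ^ β * (|c| / (|c| + 1)) ^ k := by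
        rw [exp_neg, div_pow]
        field_simp

lemma integrableOn_pow_mul_exp_neg_mul_Ioi (k : ℕ) {d : ℝ} (hd : 0 < d) :
    IntegrableOn (fun x => x ^ k * exp (-d * x)) (Ioi 0) := by
  simpa [rpow_natCast] using
    integrableOn_rpow_mul_exp_neg_mul_rpow (p := 1) (s := k)
      (neg_one_lt_zero.trans_le k.cast_nonneg) one_pos hd

lemma integral_pow_mul_exp_neg_mul_Ioi (k : ℕ) {d : ℝ} (hd : 0 < d) :
    ∫ x in Ioi 0, x ^ k * exp (-d * x) = k ! / d ^ (k + 1) := by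
  have h := integral_rpow_mul_exp_neg_mul_Ioi (a := k + 1) (by positivity) hd
  rw [add_sub_cancel_right, Gamma_nat_eq_factorial, ← Nat.cast_add_one, rpow_natCast] at h
  simp_rw [rpow_natCast, ← neg_mul] at h
  rw [h, one_div, inv_pow, div_eq_inv_mul]

lemma integral_tsum_pow_mul_exp_neg_mul_Ioi {a : ℕ → ℝ} {d : ℝ} (hd : 0 < d)
    (ha : Summable fun k => |a k| * (k ! / d ^ (k + 1))) :
    ∫ x in Ioi 0, (∑' k, a k * x ^ k) * exp (-d * x) = ∑' k, a k * (k ! / d ^ (k + 1)) := by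
  have hint (k : ℕ) : IntegrableOn (fun x => a k * (x ^ k * exp (-d * x))) (Ioi 0) :=
    (integrableOn_pow_mul_exp_neg_mul_Ioi k hd).const_mul (a k)
  have hnorm (k : ℕ) :
      ∫ x in Ioi 0, ‖a k * (x ^ k * exp (-d * x))‖ = |a k| * (k ! / d ^ (k + 1)) := by
    rw [← integral_pow_mul_exp_neg_mul_Ioi k hd, ← integral_const_mul]
    refine setIntegral_congr_fun measurableSet_Ioi fun x (hx : 0 < x) => ?_
    have : 0 ≤ x ^ k * exp (-d * x) := by positivity
    rw [norm_mul, Real.norm_eq_abs, Real.norm_of_nonneg this]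
  simp_rw [← tsum_mul_right, mul_assoc]
  rw [← integral_tsum_of_summable_integral_norm hint (by simpa only [hnorm] using ha)]
  simp_rw [integral_const_mul, integral_pow_mul_exp_neg_mul_Ioi _ hd]

theorem laplace_wrightBessel (α β d : ℝ) (hα : 0 < α) (hd : 0 < d) :
    ∫ x in Set.Ioi (0 : ℝ), wrightBessel α β (-x) * Real.exp (-d * x)
      = (1 / d) * mittagLeffler α β (-(1 / d)) := by
  set a : ℕ → ℝ := fun k => (-1) ^ k / (k ! * Gamma (k * α + β))
  have hterm (k : ℕ) :
      a k * (k ! / d ^ (k + 1)) = 1 / d * ((-(1 / d)) ^ k / Gamma (α * k + β)) := by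
    simp only [a, neg_pow (1 / d), div_pow, one_pow]
    field_simp
    ring
  have hseries (x : ℝ) : wrightBessel α β (-x) = ∑' k, a k * x ^ k := by
    refine tsum_congr fun k => ?_
    simp only [a, neg_pow x]
    ring
  have hsummable : Summable fun k => |a k| * (k ! / d ^ (k + 1)) := by
    have := ((summable_pow_div_Gamma_mul_add hα β (-(1 / d))).mul_left (1 / d)).abs
    refine this.congr fun k => ?_
    have : (0 : ℝ) < k ! / d ^ (k + 1) := by positivity
    rw [← abs_of_pos this, ← abs_mul, hterm, mul_comm α]
  simp_rw [hseries, integral_tsum_pow_mul_exp_neg_mul_Ioi hd hsummable, hterm, tsum_mul_left,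
    mittagLeffler]
end

section
/- Let ν ∈ ℝ and x, y, t ∈ ℝ with |y t²| < 1. Then the exponential generating function of the auxiliary Hermite-like polynomials satisfies ∑_{n=0}^{∞} (tⁿ/n!) B_n(x, y; ν) = e^{x t} · W_{-1, ν+1/2}(y t²), where W_{-1, ν+1/2}(z) = ∑_{k=0}^{∞} z^k / (k! Γ(ν + 1/2 - k)) (a series with radius of convergence at least 1), and both series converge absolutely under the stated hypothesis. -/
open Real MeasureTheory Filter

/-- Auxiliary Hermite-like polynomials
`B_n(x,y;ν) = n! ∑_{k=0}^{⌊n/2⌋} x^{n-2k} y^k / ((n-2k)! k! Γ(ν - k + 1/2))`. -/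
noncomputable def auxB (n : ℕ) (x y ν : ℝ) : ℝ :=
  (n.factorial : ℝ) * ∑ k ∈ Finset.range (n / 2 + 1),
    x ^ (n - 2 * k) * y ^ k /
      ((Nat.factorial (n - 2 * k) : ℝ) * (Nat.factorial k : ℝ) * Real.Gamma (ν - k + 1 / 2))

/-!
With `z = y t²`, the term `tⁿ Bₙ(x, y; ν) / n!` is the sum of
`(x t)ᵐ / m! · zᵏ / (k! Γ(ν + 1/2 - k))` over `m + 2k = n`, so the generating function is the
product of the exponential series of `x t` and the Wright series, regrouped along `m + 2k = n`.
The regrouping is legitimate because both series converge absolutely: the reflection formula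
gives `|1/Γ(s)| ≤ Γ(1 - s)/π` for `s < 1`, so the Wright series is dominated by
`∑ |z|ᵏ Γ(k + 1/2 - ν) / (π k!)`, whose consecutive terms have ratio
`|z| (k + 1/2 - ν)/(k + 1) → |z| < 1`.
-/

open Finset Topology
open scoped Nat

theorem mem_range_div_add_one_iff {m n k : ℕ} (hm : 0 < m) :
    k ∈ range (n / m + 1) ↔ m * k ≤ n := by
  rw [mem_range, Nat.lt_succ_iff, Nat.le_div_iff_mul_le hm, mul_comm]

theorem hasSum_sum_range_div_mul_of_summable_norm {R : Type*} [NormedRing R] [CompleteSpace R]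
    {a b : ℕ → R} {m : ℕ} (hm : 0 < m) (ha : Summable fun n => ‖a n‖)
    (hb : Summable fun k => ‖b k‖) :
    HasSum (fun n => ∑ k ∈ range (n / m + 1), a (n - m * k) * b k)
      ((∑' n, a n) * ∑' k, b k) := by
  have hprod : HasSum (fun p : ℕ × ℕ => a p.1 * b p.2) ((∑' n, a n) * ∑' k, b k) := by
    rw [tsum_mul_tsum_of_summable_norm ha hb]
    exact (summable_mul_of_summable_norm ha hb).hasSum
  set G : ℕ × ℕ → R := fun p => if m * p.2 ≤ p.1 then a (p.1 - m * p.2) * b p.2 else 0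
  set i : ℕ × ℕ → ℕ × ℕ := fun p => (p.1 + m * p.2, p.2)
  have hi : Function.Injective i := by
    rintro ⟨j, k⟩ ⟨j', k'⟩ h
    simp only [i, Prod.mk.injEq] at h
    obtain ⟨h1, rfl⟩ := h
    exact Prod.ext (by omega) rfl
  have hG : HasSum G ((∑' n, a n) * ∑' k, b k) := by
    refine (hi.hasSum_iff ?_).mp ?_
    · rintro ⟨n, k⟩ hp
      have : ¬ m * k ≤ n := fun hle => hp ⟨(n - m * k, k), by simp [i, Nat.sub_add_cancel hle]⟩
      simp [G, this]
    · convert hprod using 2 with p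
      simp [G, i]
  refine hG.prod_fiberwise fun n => ?_
  convert hasSum_sum_of_ne_finset_zero (L := SummationFilter.unconditional ℕ)
    (s := range (n / m + 1)) (f := fun k => G (n, k)) ?_ using 1
  · refine sum_congr rfl fun k hk => ?_
    simp [G, (mem_range_div_add_one_iff hm).mp hk]
  · intro k hk
    simp [G, (mem_range_div_add_one_iff hm).not.mp hk]

theorem abs_inv_Gamma_le {s : ℝ} (hs : s < 1) : |(Gamma s)⁻¹| ≤ Gamma (1 - s) / π := by
  have hΓ : 0 < Gamma (1 - s) := Gamma_pos_of_pos (by linarith)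
  rcases eq_or_ne (Gamma s) 0 with h0 | h0
  · rw [h0, inv_zero, abs_zero]
    positivity
  have hrefl := Gamma_mul_Gamma_one_sub s
  have hsin : sin (π * s) ≠ 0 := fun h => by
    rw [h, div_zero] at hrefl
    exact mul_ne_zero h0 hΓ.ne' hrefl
  have hinv : (Gamma s)⁻¹ = Gamma (1 - s) * sin (π * s) / π := by
    refine inv_eq_of_mul_eq_one_right ?_
    rw [← mul_div_assoc, ← mul_assoc, hrefl, div_mul_cancel₀ _ hsin, div_self pi_ne_zero]
  rw [hinv, abs_div, abs_mul, abs_of_pos hΓ, abs_of_pos pi_pos]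
  gcongr
  exact mul_le_of_le_one_right hΓ.le (abs_sin_le_one _)

theorem summable_pow_mul_Gamma_add_div_factorial (a : ℝ) {r : ℝ} (hr0 : 0 ≤ r) (hr : r < 1) :
    Summable fun k : ℕ => r ^ k * Gamma (k + a) / k ! := by
  have hratio : Tendsto (fun k : ℕ => r * ((a + 1 * k) / (1 + 1 * k))) atTop (𝓝 (r * (1 / 1))) :=
    (tendsto_add_mul_div_add_mul_atTop_nhds a 1 1 one_ne_zero).const_mul r
  simp only [one_mul, div_one, mul_one] at hratio
  refine summable_of_ratio_norm_eventually_le (r := (1 + r) / 2) (by linarith) ?_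
  filter_upwards [hratio.eventually_le_const (by linarith : r < (1 + r) / 2),
    eventually_gt_atTop ⌈-a⌉₊] with k hk hka
  have hpos : 0 < (k : ℝ) + a := by
    have := Nat.lt_of_ceil_lt hka
    linarith
  have hsucc : r ^ (k + 1) * Gamma ((k + 1 : ℕ) + a) / (k + 1)! =
      r * ((a + k) / (1 + k)) * (r ^ k * Gamma (k + a) / k !) := by
    rw [show ((k + 1 : ℕ) : ℝ) + a = (k + a) + 1 by push_cast; ring, Gamma_add_one hpos.ne',
      Nat.factorial_succ]
    push_cast
    field_simp
    ring
  have hterm : 0 ≤ r ^ k * Gamma (k + a) / k ! := by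
    have := Gamma_pos_of_pos hpos
    positivity
  rw [hsucc, norm_mul, Real.norm_of_nonneg hterm, Real.norm_of_nonneg
    (mul_nonneg hr0 (div_nonneg (by linarith) (by positivity)))]
  exact mul_le_mul_of_nonneg_right hk hterm

theorem summable_pow_div_factorial_mul_Gamma_sub (β : ℝ) {z : ℝ} (hz : |z| < 1) :
    Summable fun k : ℕ => z ^ k / (k ! * Gamma (β - k)) := by
  refine ((summable_pow_mul_Gamma_add_div_factorial (1 - β) (abs_nonneg z) hz).div_const π
    ).of_norm_bounded_eventually ?_
  rw [Nat.cofinite_eq_atTop]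
  filter_upwards [eventually_gt_atTop ⌈β⌉₊] with k hk
  have hβk : β - k < 1 := by
    have := Nat.lt_of_ceil_lt hk
    linarith
  have hfac : (0 : ℝ) < k ! := by positivity
  calc ‖z ^ k / (k ! * Gamma (β - k))‖ = |z| ^ k * |(Gamma (β - k))⁻¹| / k ! := by
        rw [Real.norm_eq_abs, mul_comm, div_mul_eq_div_div, div_eq_mul_inv (z ^ k), abs_div,
          abs_mul, abs_pow, abs_of_pos hfac]
    _ ≤ |z| ^ k * (Gamma (1 - (β - k)) / π) / k ! := by
        gcongr
        exact abs_inv_Gamma_le hβk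
    _ = |z| ^ k * Gamma (k + (1 - β)) / k ! / π := by ring_nf

theorem pow_div_factorial_mul_auxB (n : ℕ) (x y ν t : ℝ) :
    t ^ n / n ! * auxB n x y ν = ∑ k ∈ range (n / 2 + 1),
      (x * t) ^ (n - 2 * k) / (n - 2 * k)! * ((y * t ^ 2) ^ k / (k ! * Gamma (ν + 1 / 2 - k))) := by
  rw [auxB, ← mul_assoc, div_mul_cancel₀ _ (by positivity), mul_sum]
  refine sum_congr rfl fun k hk => ?_
  have htn : t ^ n = t ^ (n - 2 * k) * (t ^ 2) ^ k := by
    rw [← pow_mul, ← pow_add, Nat.sub_add_cancel ((mem_range_div_add_one_iff two_pos).mp hk)]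
  rw [htn, show ν + 1 / 2 - k = ν - k + 1 / 2 by ring]
  ring

theorem auxB_generating_function (ν x y t : ℝ) (h : |y * t ^ 2| < 1) :
    Summable (fun n : ℕ => t ^ n / (n.factorial : ℝ) * auxB n x y ν) ∧
    Summable (fun k : ℕ =>
      (y * t ^ 2) ^ k / ((k.factorial : ℝ) * Real.Gamma (ν + 1 / 2 - k))) ∧
    ∑' n : ℕ, t ^ n / (n.factorial : ℝ) * auxB n x y ν
      = Real.exp (x * t) *
        ∑' k : ℕ, (y * t ^ 2) ^ k / ((k.factorial : ℝ) * Real.Gamma (ν + 1 / 2 - k)) := by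
  have hW := summable_pow_div_factorial_mul_Gamma_sub (ν + 1 / 2) h
  have hprod := hasSum_sum_range_div_mul_of_summable_norm two_pos
    (NormedSpace.norm_expSeries_div_summable (x * t)) hW.abs
  simp_rw [← pow_div_factorial_mul_auxB] at hprod
  rw [(NormedSpace.expSeries_div_hasSum_exp (x * t)).tsum_eq, ← Real.exp_eq_exp_ℝ] at hprod
  exact ⟨hprod.summable, hW, hprod.tsum_eq⟩
end
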